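/- Let A ∈ ℂ⟦z⟧ be a formal power series that is not rational and has finite Hadamard grade exactly d over ℂ. Then in every decomposition A = B₁ * B₂ * ⋯ * B_d with each Bᵢ ∈ ℂ⟦z⟧ algebraic over ℂ(z), every factor Bᵢ is not rational. -/

import Mathlib

open PowerSeries

/-- The Hadamard product of two formal power series: termwise product of coefficients. -/
noncomputable def hadamardMul {K : Type*} [CommRing K] (A B : PowerSeries K) : PowerSeries K :=
  PowerSeries.mk fun n => coeff n A * coeff n B

/-- A formal power series `A ∈ K⟦z⟧` is algebraic over `K(z)`: there is a nonzero
polynomial `P ∈ K[z][y]` with `P(A) = 0`. -/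
def IsAlgebraicPS {K : Type*} [CommRing K] (A : PowerSeries K) : Prop :=
  ∃ P : Polynomial (Polynomial K), P ≠ 0 ∧
    Polynomial.eval₂ Polynomial.coeToPowerSeries.ringHom A P = 0

/-- `A` has Hadamard grade at most `d` over `K`: it is the Hadamard product of `d`
formal power series, each algebraic over `K(z)`. -/
def HadamardGradeLe {K : Type*} [CommRing K] (A : PowerSeries K) (d : ℕ) : Prop :=
  ∃ B : Fin d → PowerSeries K, (∀ i, IsAlgebraicPS (B i)) ∧
    ∀ n, coeff n A = ∏ i, coeff n (B i)

/-- A formal power series `A ∈ K⟦z⟧` is D-finite: there are polynomials `p₀, …, p_m`,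
not all zero, with `p_m A⁽ᵐ⁾ + ⋯ + p₁ A' + p₀ A = 0`. -/
def IsDFinitePS {K : Type*} [CommRing K] (A : PowerSeries K) : Prop :=
  ∃ (m : ℕ) (p : Fin (m + 1) → Polynomial K), (∃ i, p i ≠ 0) ∧
    ∑ i : Fin (m + 1), ((p i : PowerSeries K) * (⇑(PowerSeries.derivative K))^[i] A) = 0

/-- A formal power series is rational: `Q · A = P` with `Q(0) ≠ 0`. -/
def IsRationalPS {K : Type*} [CommRing K] (A : PowerSeries K) : Prop :=
  ∃ P Q : Polynomial K, Q.coeff 0 ≠ 0 ∧ (Q : PowerSeries K) * A = (P : PowerSeries K)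

/-!
By Jungen's theorem the Hadamard product of a rational and an algebraic series is algebraic, so a
rational factor of a decomposition into `d ≥ 2` algebraic factors can be absorbed into another
factor, leaving `d - 1` factors; for `d = 1` the factor is `A` itself.

For Jungen's theorem, consider the series `v` such that `v ⊙ B` is algebraic for every algebraic
`B`. They form a `K[z]`-module (`z v ⊙ B = z (v ⊙ B')` with `B' = (B - B(0)) / z`), closed under
differentiation (`v' ⊙ B = (v ⊙ z B)'`, and algebraic series are closed under differentiation).
It contains `1 / (z - μ)`, whose Hadamard product is a rescaling `B(z / μ)`, hence all powers
`1 / (z - μ)^k` by differentiation, hence all rational series by partial fractions.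
-/

open scoped Polynomial

section Algebraic

variable {K : Type*} [Field K]

theorem isAlgebraicPS_iff {B : K⟦X⟧} : IsAlgebraicPS B ↔ IsAlgebraic K[X] B :=
  Iff.rfl

@[simp]
theorem algebraMap_polynomial_eq_coe (p : K[X]) : algebraMap K[X] K⟦X⟧ p = p :=
  rfl

theorem isAlgebraic_coe (p : K[X]) : IsAlgebraic K[X] (p : K⟦X⟧) :=
  isAlgebraic_algebraMap p

theorem isAlgebraic_C (a : K) : IsAlgebraic K[X] (C a : K⟦X⟧) :=
  Polynomial.coe_C a ▸ isAlgebraic_coe _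

variable (K) in
theorem isAlgebraic_X : IsAlgebraic K[X] (X : K⟦X⟧) :=
  Polynomial.coe_X (R := K) ▸ isAlgebraic_coe _

theorem IsAlgebraic.shift {B : K⟦X⟧} (hB : IsAlgebraic K[X] B) :
    IsAlgebraic K[X] (mk fun n ↦ coeff (n + 1) B) :=
  .of_mul (mem_nonZeroDivisors_of_ne_zero X_ne_zero) (isAlgebraic_X K)
    (sub_const_eq_X_mul_shift B ▸ hB.sub (isAlgebraic_C _))

theorem IsAlgebraic.rescale {B : K⟦X⟧} (hB : IsAlgebraic K[X] B) (a : K) :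
    IsAlgebraic K[X] (rescale a B) := by
  rcases eq_or_ne a 0 with rfl | ha
  · rw [rescale_zero_apply]
    exact isAlgebraic_C _
  let := invertibleOfNonzero ha
  refine hB.ringHom_of_comp_eq (Polynomial.algEquivCMulXAddC a 0) (PowerSeries.rescale a)
    (AlgEquiv.injective _) (Polynomial.ringHom_ext (fun b ↦ ?_) ?_)
  · ext (_ | n) <;> simp [coeff_C]
  · simp [rescale_X]

theorem derivative_aeval_sub_mem_adjoin (B : K⟦X⟧) (P : K[X][X]) :
    d⁄dX K (Polynomial.aeval B P) - Polynomial.aeval B (Polynomial.derivative P) * d⁄dX K B ∈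
      Algebra.adjoin K[X] {B} := by
  induction P using Polynomial.induction_on' with
  | add P Q hP hQ =>
    convert add_mem hP hQ using 1
    simp only [map_add, add_mul]
    ring
  | monomial n a =>
    have hmem : (↑(Polynomial.derivative a) * B ^ n : K⟦X⟧) ∈ Algebra.adjoin K[X] {B} :=
      Subalgebra.smul_mem _ (pow_mem (Algebra.self_mem_adjoin_singleton _ B) n) _
    have hn : ((n : K[X]) : K⟦X⟧) = n := map_natCast (algebraMap K[X] K⟦X⟧) n
    convert hmem using 1
    simp only [Polynomial.aeval_monomial, algebraMap_polynomial_eq_coe, Derivation.leibniz,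
      Derivation.leibniz_pow, smul_eq_mul, nsmul_eq_mul, derivative_coe,
      Polynomial.derivative_monomial, Polynomial.coe_mul, hn]
    ring

theorem IsAlgebraic.derivative [CharZero K] {B : K⟦X⟧} (hB : IsAlgebraic K[X] B) :
    IsAlgebraic K[X] (d⁄dX K B) := by
  -- Differentiating `P(B) = 0` for `P` of minimal degree gives `P'(B) * B' ∈ K[z][B]`,
  -- with `P'(B) ≠ 0`.
  have hadj : ∀ y ∈ Algebra.adjoin K[X] {B}, IsAlgebraic K[X] y :=
    Algebra.isAlgebraic_adjoin_singleton_iff.mpr hB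
  obtain ⟨P, hP0, hPB⟩ := hB
  induction hn : P.natDegree using Nat.strong_induction_on generalizing P with
  | _ n ih =>
  have hdeg : P.natDegree ≠ 0 := by
    intro h
    rw [Polynomial.eq_C_of_natDegree_eq_zero h] at hP0 hPB
    rw [Polynomial.aeval_C, algebraMap_polynomial_eq_coe, Polynomial.coe_eq_zero_iff] at hPB
    exact hP0 (by rw [hPB, map_zero])
  by_cases hP' : Polynomial.aeval B (Polynomial.derivative P) = 0
  · exact ih _ (hn ▸ Polynomial.natDegree_derivative_lt hdeg) _
      (mt Polynomial.derivative_eq_zero.mp hdeg) hP' rfl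
  · have h := hadj _ (derivative_aeval_sub_mem_adjoin B P)
    rw [hPB, map_zero, zero_sub] at h
    exact .of_mul (mem_nonZeroDivisors_of_ne_zero hP')
      (hadj _ (Polynomial.aeval_mem_adjoin_singleton _ _)) (by simpa using h.neg)

end Algebraic

section Hadamard

variable {R : Type*} [CommRing R]

@[simp]
theorem coeff_hadamardMul (A B : R⟦X⟧) (n : ℕ) :
    coeff n (hadamardMul A B) = coeff n A * coeff n B :=
  coeff_mk _ _

theorem hadamardMul_add_left (A A' B : R⟦X⟧) :
    hadamardMul (A + A') B = hadamardMul A B + hadamardMul A' B := by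
  ext n
  simp [add_mul]

theorem hadamardMul_C_mul_left (a : R) (A B : R⟦X⟧) :
    hadamardMul (C a * A) B = C a * hadamardMul A B := by
  ext n
  simp [mul_assoc]

theorem hadamardMul_X_mul_left (A B : R⟦X⟧) :
    hadamardMul (X * A) B = X * hadamardMul A (mk fun n ↦ coeff (n + 1) B) := by
  ext (_ | n) <;> simp [coeff_succ_X_mul]

theorem hadamardMul_one_left (B : R⟦X⟧) : hadamardMul 1 B = C (constantCoeff B) := by
  ext (_ | n) <;> simp [coeff_one, coeff_C]

theorem hadamardMul_derivative_left (A B : R⟦X⟧) :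
    hadamardMul (d⁄dX R A) B = d⁄dX R (hadamardMul A (X * B)) := by
  ext n
  simp only [coeff_hadamardMul, coeff_derivative, coeff_succ_X_mul]
  ring

theorem hadamardMul_invUnitsSub_left (u : Rˣ) (B : R⟦X⟧) :
    hadamardMul (invUnitsSub u) B = C (↑u⁻¹ : R) * rescale (↑u⁻¹ : R) B := by
  ext n
  simp [coeff_invUnitsSub, coeff_rescale, coeff_C_mul, divp, pow_succ]
  ring

end Hadamard

section Multipliers

variable (K : Type*) [Field K]

def hadamardMultipliers : Submodule K[X] K⟦X⟧ where
  carrier := {v | ∀ B : K⟦X⟧, IsAlgebraic K[X] B → IsAlgebraic K[X] (hadamardMul v B)}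
  zero_mem' B _ := by
    convert isAlgebraic_C (0 : K)
    ext n
    simp
  add_mem' hv hw B hB := by
    rw [hadamardMul_add_left]
    exact (hv B hB).add (hw B hB)
  smul_mem' p v hv := by
    rw [Algebra.smul_def, algebraMap_polynomial_eq_coe]
    induction p using Polynomial.induction_on with
    | C a =>
      intro B hB
      rw [Polynomial.coe_C, hadamardMul_C_mul_left]
      exact (isAlgebraic_C a).mul (hv B hB)
    | add p q hp hq =>
      intro B hB
      rw [Polynomial.coe_add, add_mul, hadamardMul_add_left]
      exact (hp B hB).add (hq B hB)
    | monomial n a ih =>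
      intro B hB
      have h : ((Polynomial.C a * Polynomial.X ^ (n + 1) : K[X]) : K⟦X⟧) * v
          = X * (((Polynomial.C a * Polynomial.X ^ n : K[X]) : K⟦X⟧) * v) := by
        simp only [Polynomial.coe_mul, Polynomial.coe_pow, Polynomial.coe_X]
        ring
      rw [h, hadamardMul_X_mul_left]
      exact (isAlgebraic_X K).mul (ih _ hB.shift)

variable {K}

theorem mem_hadamardMultipliers {v : K⟦X⟧} :
    v ∈ hadamardMultipliers K ↔
      ∀ B : K⟦X⟧, IsAlgebraic K[X] B → IsAlgebraic K[X] (hadamardMul v B) :=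
  Iff.rfl

theorem one_mem_hadamardMultipliers : (1 : K⟦X⟧) ∈ hadamardMultipliers K := by
  rw [mem_hadamardMultipliers]
  intro B _
  rw [hadamardMul_one_left]
  exact isAlgebraic_C _

theorem derivative_mem_hadamardMultipliers [CharZero K] {v : K⟦X⟧}
    (hv : v ∈ hadamardMultipliers K) : d⁄dX K v ∈ hadamardMultipliers K := by
  rw [mem_hadamardMultipliers] at hv ⊢
  intro B hB
  rw [hadamardMul_derivative_left]
  exact (hv _ ((isAlgebraic_X K).mul hB)).derivative

theorem inv_X_sub_C_mem_hadamardMultipliers {μ : K} (hμ : μ ≠ 0) :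
    (X - C μ)⁻¹ ∈ hadamardMultipliers K := by
  have hinv : (X - C μ)⁻¹ = -invUnitsSub (Units.mk0 μ hμ) := by
    rw [inv_eq_iff_mul_eq_one (by simpa using hμ), ← invUnitsSub_mul_sub (Units.mk0 μ hμ)]
    simp only [Units.val_mk0]
    ring
  rw [mem_hadamardMultipliers]
  intro B hB
  rw [hinv, neg_eq_neg_one_mul, ← map_one C, ← map_neg C, hadamardMul_C_mul_left,
    hadamardMul_invUnitsSub_left]
  exact (isAlgebraic_C (-1 : K)).mul ((isAlgebraic_C (Units.mk0 μ hμ)⁻¹.val).mul (hB.rescale _))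

theorem inv_X_sub_C_pow_mem_hadamardMultipliers [CharZero K] {μ : K} (hμ : μ ≠ 0) (k : ℕ) :
    ((X - C μ) ^ k)⁻¹ ∈ hadamardMultipliers K := by
  set v : K⟦X⟧ := (X - C μ)⁻¹
  have hF : constantCoeff (X - C μ : K⟦X⟧) ≠ 0 := by simpa using hμ
  have hpow : ((X - C μ) ^ k)⁻¹ = v ^ k := by
    rw [inv_eq_iff_mul_eq_one (by simpa using pow_ne_zero k hF), ← mul_pow,
      PowerSeries.inv_mul_cancel _ hF, one_pow]
  rw [hpow]
  clear hpow
  induction k with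
  | zero => simpa using one_mem_hadamardMultipliers
  | succ k ih =>
    rcases k with _ | k
    · simpa using inv_X_sub_C_mem_hadamardMultipliers hμ
    have hk : (k + 1 : K) ≠ 0 := Nat.cast_add_one_ne_zero k
    have hv : d⁄dX K v = -v ^ 2 := by
      simp [v, derivative_inv']
    have hd : d⁄dX K (v ^ (k + 1)) = -(C ((k : K) + 1) * v ^ (k + 2)) := by
      rw [Derivation.leibniz_pow, hv, Nat.add_sub_cancel, smul_eq_mul, nsmul_eq_mul,
        show ((k + 1 : ℕ) : K⟦X⟧) = C ((k : K) + 1) by simp]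
      ring
    have hv' : v ^ (k + 2) = Polynomial.C (-((k : K) + 1)⁻¹) • d⁄dX K (v ^ (k + 1)) := by
      rw [hd, Algebra.smul_def, algebraMap_polynomial_eq_coe, Polynomial.coe_C, mul_neg,
        ← mul_assoc, ← map_mul]
      simp [hk]
    rw [hv']
    exact Submodule.smul_mem _ _ (derivative_mem_hadamardMultipliers ih)

end Multipliers

section Inverses

variable {K : Type*} [Field K]

theorem coe_mul_inv_mem_of_isCoprime {N : Submodule K[X] K⟦X⟧} {P Q : K[X]}
    (hPQ : IsCoprime P Q) (hP0 : P.coeff 0 ≠ 0) (hQ0 : Q.coeff 0 ≠ 0) (hP : (P : K⟦X⟧)⁻¹ ∈ N)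
    (hQ : (Q : K⟦X⟧)⁻¹ ∈ N) : ((P * Q : K[X]) : K⟦X⟧)⁻¹ ∈ N := by
  obtain ⟨a, b, hab⟩ := hPQ
  have hab' : (a : K⟦X⟧) * P + b * Q = 1 := by
    rw [← Polynomial.coe_mul, ← Polynomial.coe_mul, ← Polynomial.coe_add, hab, Polynomial.coe_one]
  have hPinv := PowerSeries.mul_inv_cancel (P : K⟦X⟧) (by simpa using hP0)
  have hQinv := PowerSeries.mul_inv_cancel (Q : K⟦X⟧) (by simpa using hQ0)
  have h : ((P * Q : K[X]) : K⟦X⟧)⁻¹ = a • (Q : K⟦X⟧)⁻¹ + b • (P : K⟦X⟧)⁻¹ := by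
    simp only [Algebra.smul_def, algebraMap_polynomial_eq_coe, Polynomial.coe_mul,
      PowerSeries.mul_inv_rev]
    linear_combination -((Q : K⟦X⟧)⁻¹ * (P : K⟦X⟧)⁻¹) * hab' + a * (Q : K⟦X⟧)⁻¹ * hPinv
      + b * (P : K⟦X⟧)⁻¹ * hQinv
  rw [h]
  exact add_mem (N.smul_mem a hQ) (N.smul_mem b hP)

theorem coe_inv_mem_hadamardMultipliers [IsAlgClosed K] [CharZero K] {Q : K[X]}
    (hQ : Q.coeff 0 ≠ 0) : (Q : K⟦X⟧)⁻¹ ∈ hadamardMultipliers K := by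
  induction hn : Q.natDegree using Nat.strong_induction_on generalizing Q with
  | _ n ih =>
  rcases eq_or_ne n 0 with rfl | hn0
  · rw [Polynomial.eq_C_of_natDegree_eq_zero hn, Polynomial.coe_C, PowerSeries.C_inv,
      ← mul_one (C _), ← Polynomial.coe_C, ← algebraMap_polynomial_eq_coe, ← Algebra.smul_def]
    exact Submodule.smul_mem _ _ one_mem_hadamardMultipliers
  have hQ0 : Q ≠ 0 := by rintro rfl; simp at hQ
  obtain ⟨μ, hμ⟩ := IsAlgClosed.exists_root Q
    (by rwa [Polynomial.degree_eq_natDegree hQ0, hn, Nat.cast_ne_zero])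
  have hμ0 : μ ≠ 0 := by
    rintro rfl
    exact hQ (by rwa [Polynomial.coeff_zero_eq_eval_zero])
  obtain ⟨Q₁, hQQ₁, hndvd⟩ := Q.exists_eq_pow_rootMultiplicity_mul_and_not_dvd hQ0 μ
  set k := Q.rootMultiplicity μ
  have hk : 0 < k := (Polynomial.rootMultiplicity_pos hQ0).mpr hμ
  have hQ₁ : Q₁.coeff 0 ≠ 0 := by
    rintro h
    rw [hQQ₁, Polynomial.mul_coeff_zero, h, mul_zero] at hQ
    exact hQ rfl
  have hdeg : Q₁.natDegree < n := by
    rw [← hn, hQQ₁, Polynomial.natDegree_mul (pow_ne_zero _ (Polynomial.X_sub_C_ne_zero μ))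
      (by rintro rfl; simp at hQ₁), Polynomial.natDegree_pow, Polynomial.natDegree_X_sub_C]
    omega
  rw [hQQ₁]
  refine coe_mul_inv_mem_of_isCoprime
    ((Polynomial.irreducible_X_sub_C μ).coprime_iff_not_dvd.mpr hndvd).pow_left ?_ hQ₁ ?_
    (ih _ hdeg hQ₁ rfl)
  · simp [Polynomial.coeff_zero_eq_eval_zero, hμ0]
  · simpa using inv_X_sub_C_pow_mem_hadamardMultipliers hμ0 k

end Inverses

section Grade

variable {K : Type*} [Field K] [IsAlgClosed K] [CharZero K]

theorem IsRationalPS.mem_hadamardMultipliers {R : K⟦X⟧} (hR : IsRationalPS R) :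
    R ∈ hadamardMultipliers K := by
  obtain ⟨P, Q, hQ, hQR⟩ := hR
  have hR : R = P • (Q : K⟦X⟧)⁻¹ := by
    rw [Algebra.smul_def, algebraMap_polynomial_eq_coe,
      eq_mul_inv_iff_mul_eq (by simpa using hQ), mul_comm, hQR]
  rw [hR]
  exact Submodule.smul_mem _ _ (coe_inv_mem_hadamardMultipliers hQ)

theorem hadamardGradeLe_of_isRationalPS_factor {A : K⟦X⟧} {e : ℕ} {B : Fin (e + 2) → K⟦X⟧}
    (halg : ∀ i, IsAlgebraicPS (B i)) (hdec : ∀ n, coeff n A = ∏ i, coeff n (B i))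
    {i : Fin (e + 2)} (hi : IsRationalPS (B i)) : HadamardGradeLe A (e + 1) := by
  refine ⟨Fin.cons (hadamardMul (B i) (B (i.succAbove 0))) (fun t ↦ B (i.succAbove t.succ)),
    Fin.cases (isAlgebraicPS_iff.mpr (mem_hadamardMultipliers.mp hi.mem_hadamardMultipliers _
      (isAlgebraicPS_iff.mp (halg _)))) (fun _ ↦ halg _), fun n ↦ ?_⟩
  rw [hdec n, Fin.prod_univ_succAbove _ i, Fin.prod_univ_succ, Fin.prod_univ_succ]
  simp only [Fin.cons_zero, Fin.cons_succ, coeff_hadamardMul]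
  ring

end Grade

theorem not_rational_factors_of_minimal_hadamard_decomposition_general (A : PowerSeries ℂ)
    (hirr : ¬ IsRationalPS A) (d : ℕ)
    (hmin : ∀ e : ℕ, e < d → ¬ HadamardGradeLe A e)
    (B : Fin d → PowerSeries ℂ) (halg : ∀ i, IsAlgebraicPS (B i))
    (hdec : ∀ n, PowerSeries.coeff n A = ∏ i, PowerSeries.coeff n (B i)) :
    ∀ i, ¬ IsRationalPS (B i) := by
  intro i hi
  match d, B, i with
  | 1, B, i =>
    have hA : A = B i := by
      ext n
      rw [hdec n, Fin.prod_univ_one, Subsingleton.elim i 0]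
    exact hirr (hA ▸ hi)
  | e + 2, B, i =>
    exact hmin (e + 1) (by omega) (hadamardGradeLe_of_isRationalPS_factor halg hdec hi)

/-- If `A ∈ ℂ⟦z⟧` is not rational and has Hadamard grade exactly `d`, then in every
Hadamard decomposition of `A` into `d` algebraic power series, every factor is
not rational. -/
theorem not_rational_factors_of_minimal_hadamard_decomposition (A : PowerSeries ℂ)
    (hirr : ¬ IsRationalPS A) (d : ℕ) (hd : HadamardGradeLe A d)
    (hmin : ∀ e : ℕ, e < d → ¬ HadamardGradeLe A e)
    (B : Fin d → PowerSeries ℂ) (halg : ∀ i, IsAlgebraicPS (B i))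
    (hdec : ∀ n, PowerSeries.coeff n A = ∏ i, PowerSeries.coeff n (B i)) :
    ∀ i, ¬ IsRationalPS (B i) :=
  not_rational_factors_of_minimal_hadamard_decomposition_general A hirr d hmin B halg hdec
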